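/- Let n ≥ 2 and let G ⊊ ℝⁿ be a domain. Then for all x,y ∈ G: (i) sin(v_G(x,y)/2) ≤ s_G(x,y), and (ii) sin(\bar{v}_G(x,y)/2) ≤ r_G(x,y). -/
import Mathlib

open EuclideanGeometry Real Set

/-- The visual angle metric on a domain `G ⊊ ℝⁿ`:
`v_G(x,y) = sup_{z ∈ ∂G} ∠(x,z,y)`. -/
noncomputable def visualAngle {n : ℕ} (G : Set (EuclideanSpace ℝ (Fin n)))
    (x y : EuclideanSpace ℝ (Fin n)) : ℝ :=
  sSup ((fun z => ∠ x z y) '' frontier G)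

/-- The visual double angle metric on a domain `G ⊊ ℝⁿ`. -/
noncomputable def visualDoubleAngle {n : ℕ} (G : Set (EuclideanSpace ℝ (Fin n)))
    (x y : EuclideanSpace ℝ (Fin n)) : ℝ :=
  sSup {r : ℝ | ∃ z ∈ frontier G, ∃ w ∈ frontier G,
    r = Real.arccos ((dist x z * dist y w / (dist y z * dist x w) +
          dist y z * dist x w / (dist x z * dist y w) -
          dist x y ^ 2 * dist z w ^ 2 /
            (dist x z * dist x w * dist y z * dist y w)) / 2)}

/-- The triangular ratio metric `s_G(x,y) = sup_{z ∈ ∂G} |x−y|/(|x−z|+|z−y|)`. -/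
noncomputable def triangularRatio {n : ℕ} (G : Set (EuclideanSpace ℝ (Fin n)))
    (x y : EuclideanSpace ℝ (Fin n)) : ℝ :=
  sSup ((fun z => dist x y / (dist x z + dist z y)) '' frontier G)

/-- The Ptolemaic angular metric
`r_G(x,y) = sup_{z,w ∈ ∂G, z≠w} |z−w||x−y|/(|z−x||w−y|+|z−y||w−x|)`. -/
noncomputable def ptolemaicAngular {n : ℕ} (G : Set (EuclideanSpace ℝ (Fin n)))
    (x y : EuclideanSpace ℝ (Fin n)) : ℝ :=
  sSup {r : ℝ | ∃ z ∈ frontier G, ∃ w ∈ frontier G, z ≠ w ∧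
    r = dist z w * dist x y / (dist z x * dist w y + dist z y * dist w x)}

/-- If every element of a nonempty set `S ⊆ [0,π]` satisfies `sin (θ/2) ≤ M` with
`M ≥ 0`, then `sin (sSup S / 2) ≤ M`. -/
lemma aux_sup13 {S : Set ℝ} {M : ℝ} (hS : S.Nonempty) (hIcc : ∀ θ ∈ S, θ ∈ Icc 0 π)
    (hM : 0 ≤ M) (h : ∀ θ ∈ S, Real.sin (θ / 2) ≤ M) : Real.sin (sSup S / 2) ≤ M := by
  have hbdd : BddAbove S := ⟨π, fun θ hθ => (hIcc θ hθ).2⟩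
  set m := min M 1 with hm
  have hm0 : 0 ≤ m := le_min hM zero_le_one
  have hm1 : m ≤ 1 := min_le_right _ _
  obtain ⟨θ₀, hθ₀⟩ := hS
  have hsup_le : sSup S ≤ 2 * Real.arcsin m := by
    apply csSup_le ⟨θ₀, hθ₀⟩
    intro θ hθ
    have h1 : θ / 2 ∈ Icc (-(π/2)) (π/2) := by
      constructor <;> [linarith [pi_pos.le, (hIcc θ hθ).1]; linarith [(hIcc θ hθ).2]]
    have h2 : Real.sin (θ/2) ≤ m := le_min (h θ hθ) (Real.sin_le_one _)
    have := Real.monotone_arcsin h2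
    rw [Real.arcsin_sin h1.1 h1.2] at this
    linarith
  have hsup0 : 0 ≤ sSup S := le_csSup hbdd hθ₀ |>.trans' (hIcc θ₀ hθ₀).1
  have hmono := Real.strictMonoOn_sin.monotoneOn
  have h1 : sSup S / 2 ∈ Icc (-(π/2)) (π/2) := by
    constructor
    · linarith [pi_pos.le]
    · have := csSup_le ⟨θ₀, hθ₀⟩ (fun θ hθ => (hIcc θ hθ).2)
      linarith
  have h2 : Real.arcsin m ∈ Icc (-(π/2)) (π/2) :=
    ⟨Real.neg_pi_div_two_le_arcsin m, Real.arcsin_le_pi_div_two m⟩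
  have := hmono h1 h2 (by linarith)
  rw [Real.sin_arcsin (by linarith) hm1] at this
  exact this.trans (min_le_left _ _)

lemma pt13a {n : ℕ} (x z y : EuclideanSpace ℝ (Fin n)) (hxz : x ≠ z) :
    Real.sin (∠ x z y / 2) ≤ dist x y / (dist x z + dist z y) := by
  set a := dist x z with ha
  set b := dist z y with hb
  set c := dist x y with hc
  have ha0 : 0 < a := dist_pos.mpr hxz
  have hb0 : 0 ≤ b := dist_nonneg
  have hc0 : 0 ≤ c := dist_nonneg
  have hlaw := EuclideanGeometry.law_cos x z y
  have hang0 := EuclideanGeometry.angle_nonneg x z y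
  have hangpi := EuclideanGeometry.angle_le_pi x z y
  set γ := ∠ x z y with hγ
  have hs0 : 0 ≤ Real.sin (γ / 2) :=
    Real.sin_nonneg_of_nonneg_of_le_pi (by linarith) (by linarith [Real.pi_pos])
  have hs1 : Real.sin (γ / 2) ≤ 1 := Real.sin_le_one _
  have hcos : Real.sin (γ / 2) ^ 2 = (1 - Real.cos γ) / 2 := by
    rw [← sq_abs, Real.abs_sin_half, Real.sq_sqrt (by nlinarith [Real.cos_le_one γ])]
  rw [dist_comm y z] at hlaw
  rw [← ha, ← hb, ← hc] at hlaw
  rw [le_div_iff₀ (by linarith)]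
  have hs2 : Real.sin (γ / 2) ^ 2 ≤ 1 := by nlinarith
  nlinarith [mul_nonneg (sub_nonneg.mpr hs2) (sq_nonneg (a - b)),
    mul_nonneg hs0 (by linarith : (0:ℝ) ≤ a + b), hc0, sq_nonneg (a - b)]

lemma pt13b {A B e f : ℝ} (hA : 0 < A) (hB : 0 < B) (he : 0 ≤ e) (hf : 0 ≤ f)
    (hp1 : e * f ≤ A + B) (hp2 : A ≤ e * f + B) (hp3 : B ≤ e * f + A) :
    Real.sin (Real.arccos ((A / B + B / A - e ^ 2 * f ^ 2 / (A * B)) / 2) / 2)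
      ≤ e * f / (A + B) := by
  set Q := (A / B + B / A - e ^ 2 * f ^ 2 / (A * B)) / 2 with hQdef
  have hQeq : Q = (A ^ 2 + B ^ 2 - e ^ 2 * f ^ 2) / (2 * A * B) := by
    rw [hQdef]; field_simp
  have hef2 : e ^ 2 * f ^ 2 ≤ (A + B) ^ 2 := by nlinarith [mul_nonneg he hf]
  have hd2 : (A - B) ^ 2 ≤ e ^ 2 * f ^ 2 := by
    rcases le_total A B with h | h
    · nlinarith [mul_nonneg he hf]
    · nlinarith [mul_nonneg he hf]
  have hQ1 : -1 ≤ Q := by rw [hQeq, le_div_iff₀ (by positivity)]; nlinarith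
  have hQ2 : Q ≤ 1 := by rw [hQeq, div_le_one (by positivity)]; nlinarith
  have hc := Real.cos_arccos hQ1 hQ2
  have hs : Real.sin (Real.arccos Q / 2) = Real.sqrt ((1 - Q) / 2) := by
    rw [Real.sin_half_eq_sqrt (Real.arccos_nonneg _)
      (by linarith [Real.arccos_le_pi Q, Real.pi_pos]), hc]
  rw [hs]
  rw [show e * f / (A + B) = Real.sqrt ((e * f / (A + B)) ^ 2) from
    (Real.sqrt_sq (by positivity)).symm]
  apply Real.sqrt_le_sqrt
  have heq2 : (1 - Q) / 2 = (e ^ 2 * f ^ 2 - (A - B) ^ 2) / (4 * A * B) := by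
    rw [hQeq]; field_simp; ring
  have hK : e ^ 2 * f ^ 2 * (A - B) ^ 2 ≤ (A - B) ^ 2 * (A + B) ^ 2 := by
    nlinarith [sq_nonneg (A - B)]
  rw [heq2, div_pow, div_le_div_iff₀ (by positivity) (by positivity)]
  nlinarith [hK]

theorem stmt13 (n : ℕ) (hn : 2 ≤ n) (G : Set (EuclideanSpace ℝ (Fin n)))
    (hGopen : IsOpen G) (hGconn : IsConnected G) (hGproper : G ≠ Set.univ) :
    ∀ x ∈ G, ∀ y ∈ G,
      Real.sin (visualAngle G x y / 2) ≤ triangularRatio G x y ∧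
      Real.sin (visualDoubleAngle G x y / 2) ≤ ptolemaicAngular G x y := by
  intro x hx y hy
  have hfr : ∀ z ∈ frontier G, z ∉ G := by
    intro z hz
    rw [hGopen.frontier_eq] at hz
    exact hz.2
  have hxne : ∀ z ∈ frontier G, x ≠ z := fun z hz h => hfr z hz (h ▸ hx)
  have hyne : ∀ z ∈ frontier G, y ≠ z := fun z hz h => hfr z hz (h ▸ hy)
  have hne : (frontier G).Nonempty := by
    rw [nonempty_iff_ne_empty]
    intro h
    rcases frontier_eq_empty_iff.mp h with h | h
    · exact (hGconn.nonempty.ne_empty) h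
    · exact hGproper h
  obtain ⟨z₀, hz₀⟩ := hne
  constructor
  · -- part (i)
    have hTbdd : BddAbove ((fun z => dist x y / (dist x z + dist z y)) '' frontier G) := by
      refine ⟨1, ?_⟩
      rintro _ ⟨z, hz, rfl⟩
      have hd : dist x y ≤ dist x z + dist z y := dist_triangle x z y
      exact div_le_one_of_le₀ hd (by positivity)
    have hM : 0 ≤ triangularRatio G x y := by
      have h0 : (0:ℝ) ≤ dist x y / (dist x z₀ + dist z₀ y) := by positivity
      exact h0.trans (le_csSup hTbdd ⟨z₀, hz₀, rfl⟩)
    unfold visualAngle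
    refine aux_sup13 ⟨_, ⟨z₀, hz₀, rfl⟩⟩ ?_ ?_ ?_
    · rintro _ ⟨z, hz, rfl⟩
      exact ⟨EuclideanGeometry.angle_nonneg x z y, EuclideanGeometry.angle_le_pi x z y⟩
    · exact hM
    · rintro _ ⟨z, hz, rfl⟩
      exact (pt13a x z y (hxne z hz)).trans (le_csSup hTbdd ⟨z, hz, rfl⟩)
  · -- part (ii)
    have hRbdd : BddAbove {r : ℝ | ∃ z ∈ frontier G, ∃ w ∈ frontier G, z ≠ w ∧
        r = dist z w * dist x y / (dist z x * dist w y + dist z y * dist w x)} := by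
      refine ⟨1, ?_⟩
      rintro r ⟨z, hz, w, hw, hzw, rfl⟩
      have h1 : (0:ℝ) < dist z x := dist_pos.mpr (fun h => hxne z hz h.symm)
      have h2 : (0:ℝ) < dist w y := dist_pos.mpr (fun h => hyne w hw h.symm)
      have hden : 0 < dist z x * dist w y + dist z y * dist w x := by positivity
      have hptol := EuclideanGeometry.mul_dist_le_mul_dist_add_mul_dist z x w y
      rw [dist_comm x w] at hptol
      exact div_le_one_of_le₀ (by linarith) hden.le
    have hR0 : 0 ≤ ptolemaicAngular G x y := by
      rcases eq_empty_or_nonempty {r : ℝ | ∃ z ∈ frontier G, ∃ w ∈ frontier G, z ≠ w ∧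
          r = dist z w * dist x y / (dist z x * dist w y + dist z y * dist w x)} with h | h
      · rw [ptolemaicAngular, h, Real.sSup_empty]
      · obtain ⟨r, hr⟩ := h
        obtain ⟨z, hz, w, hw, hzw, rfl⟩ := hr
        have h0 : (0:ℝ) ≤ dist z w * dist x y /
            (dist z x * dist w y + dist z y * dist w x) := by positivity
        exact h0.trans (le_csSup hRbdd ⟨z, hz, w, hw, hzw, rfl⟩)
    unfold visualDoubleAngle
    refine aux_sup13 ⟨_, ⟨z₀, hz₀, z₀, hz₀, rfl⟩⟩ ?_ ?_ ?_
    · rintro θ ⟨z, hz, w, hw, rfl⟩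
      exact ⟨Real.arccos_nonneg _, Real.arccos_le_pi _⟩
    · exact hR0
    · rintro θ ⟨z, hz, w, hw, rfl⟩
      have hxz : (0:ℝ) < dist x z := dist_pos.mpr (hxne z hz)
      have hxw : (0:ℝ) < dist x w := dist_pos.mpr (hxne w hw)
      have hyz : (0:ℝ) < dist y z := dist_pos.mpr (hyne z hz)
      have hyw : (0:ℝ) < dist y w := dist_pos.mpr (hyne w hw)
      by_cases hzw : z = w
      · subst hzw
        have hQ : (dist x z * dist y z / (dist y z * dist x z) +
            dist y z * dist x z / (dist x z * dist y z) -
            dist x y ^ 2 * dist z z ^ 2 /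
              (dist x z * dist x z * dist y z * dist y z)) / 2 = 1 := by
          rw [dist_self]
          rw [mul_comm (dist y z) (dist x z), div_self (by positivity)]
          norm_num
        rw [hQ, Real.arccos_one]
        norm_num
        exact hR0
      · set A := dist x z * dist y w with hA
        set B := dist y z * dist x w with hB
        have hA0 : 0 < A := by positivity
        have hB0 : 0 < B := by positivity
        have hden : dist x z * dist x w * dist y z * dist y w = A * B := by
          rw [hA, hB]; ring
        have hp1 : dist x y * dist z w ≤ A + B := by
          have := EuclideanGeometry.mul_dist_le_mul_dist_add_mul_dist x z y w
          rw [dist_comm z y] at this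
          linarith
        have hp2 : A ≤ dist x y * dist z w + B := by
          have := EuclideanGeometry.mul_dist_le_mul_dist_add_mul_dist x y z w
          linarith
        have hp3 : B ≤ dist x y * dist z w + A := by
          have := EuclideanGeometry.mul_dist_le_mul_dist_add_mul_dist y x z w
          rw [dist_comm y x] at this
          linarith
        have hkey := pt13b hA0 hB0 (dist_nonneg : (0:ℝ) ≤ dist x y)
          (dist_nonneg : (0:ℝ) ≤ dist z w) hp1 hp2 hp3
        rw [hden]
        refine hkey.trans (le_csSup hRbdd ⟨z, hz, w, hw, hzw, ?_⟩)
        rw [hA, hB, dist_comm z x, dist_comm w y, dist_comm z y, dist_comm w x]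
        ring
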